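/- arXiv:1504.01147 — 5 statements merged into one kernel-verified Lean document; each statement's English description precedes it below -/
import Mathlib

section
/- For integers N > x₀ ≥ 2, the profile likelihood L(N) = (N! / (N - x₀)!) · (N - x₀)^(N - x₀) · N^(-N) satisfies L(N) < (1 - 1/N)^(N-1); consequently L is bounded above by a quantity decreasing in N. -/
theorem stmt_2 (x₀ : ℕ) (hx₀ : 2 ≤ x₀) (N : ℕ) (hN : x₀ < N) :
    ((N.factorial : ℝ) / (N - x₀).factorial) * ((N : ℝ) - x₀) ^ (N - x₀) / (N : ℝ) ^ N
      < (1 - 1 / (N : ℝ)) ^ (N - 1) := by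
  have hxN : x₀ ≤ N := le_of_lt hN
  set m := N - x₀ with hm
  set d := N.descFactorial x₀ with hd
  have hNpos : 0 < N := lt_of_le_of_lt (Nat.zero_le _) hN
  -- key nat inequality: d * m^m < N * (N-1)^(N-1)
  have hdle : d ≤ N * (N - 1) ^ (x₀ - 1) := by
    obtain ⟨x', rfl⟩ : ∃ x', x₀ = x' + 1 := ⟨x₀ - 1, (Nat.succ_pred_eq_of_pos (by omega)).symm⟩
    obtain ⟨N', rfl⟩ : ∃ N', N = N' + 1 := ⟨N - 1, (Nat.succ_pred_eq_of_pos hNpos).symm⟩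
    rw [hd, Nat.succ_descFactorial_succ]
    simp only [Nat.add_sub_cancel]
    exact Nat.mul_le_mul_left _ (Nat.descFactorial_le_pow _ _)
  have hdpos : 0 < d := by
    rw [hd, Nat.pos_iff_ne_zero, Ne, Nat.descFactorial_eq_zero_iff_lt]
    omega
  have hmm : m ^ m < (N - 1) ^ m := by
    apply Nat.pow_lt_pow_left (by omega) (by omega)
  have hkey : d * m ^ m < N * (N - 1) ^ (N - 1) := by
    calc d * m ^ m < d * (N - 1) ^ m := by
          exact Nat.mul_lt_mul_of_le_of_lt (le_refl d) hmm hdpos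
      _ ≤ (N * (N - 1) ^ (x₀ - 1)) * (N - 1) ^ m :=
          Nat.mul_le_mul_right _ hdle
      _ = N * (N - 1) ^ (N - 1) := by
          rw [mul_assoc, ← pow_add]
          congr 2
          omega
  -- cast everything to ℝ
  have hcast : ((N.factorial : ℝ) / (N - x₀).factorial) = (d : ℝ) := by
    have := Nat.factorial_mul_descFactorial hxN
    field_simp
    exact_mod_cast this.symm
  have hNx : ((N : ℝ) - x₀) = ((m : ℕ) : ℝ) := by
    rw [hm]; push_cast [hxN]; ring
  have hN1 : (1 - 1 / (N : ℝ)) = ((N - 1 : ℕ) : ℝ) / N := by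
    have : (0 : ℝ) < N := by exact_mod_cast hNpos
    push_cast [Nat.one_le_iff_ne_zero.mpr hNpos.ne']
    field_simp
  rw [hcast, hNx, hN1, div_pow, div_lt_div_iff₀ (by positivity) (by positivity)]
  have hNN : (N : ℝ) ^ N = (N : ℝ) * (N : ℝ) ^ (N - 1) := by
    rw [← pow_succ']
    congr 1
    omega
  rw [hNN]
  have : ((d : ℝ) * (m : ℝ) ^ m) < (N : ℝ) * ((N - 1 : ℕ) : ℝ) ^ (N - 1) := by
    exact_mod_cast hkey
  calc (d : ℝ) * (m : ℝ) ^ m * (N : ℝ) ^ (N - 1)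
      < ((N : ℝ) * ((N - 1 : ℕ) : ℝ) ^ (N - 1)) * (N : ℝ) ^ (N - 1) := by
        apply mul_lt_mul_of_pos_right this (by positivity)
    _ = ((N - 1 : ℕ) : ℝ) ^ (N - 1) * ((N : ℝ) * (N : ℝ) ^ (N - 1)) := by ring
end

section
/- The profile likelihood L(N) = (N!/(N-x₀)!) · (N-x₀)^(N-x₀) · N^(-N) for the model M_tb is strictly decreasing in N for integers N > x₀, hence its maximum over {N : N > x₀} is attained at N = x₀ + 1. -/
private lemma bern_strict (a : ℝ) (ha : -1 < a) (ha0 : a ≠ 0) (n : ℕ) (hn : 1 ≤ n) :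
    1 + ((n : ℝ) + 1) * a < (1 + a) ^ (n + 1) := by
  have h1 : (1 : ℝ) + (n : ℝ) * a ≤ (1 + a) ^ n := one_add_mul_le_pow (by linarith) n
  have h2 : (0 : ℝ) < 1 + a := by linarith
  have h3 : (0 : ℝ) < (n : ℝ) := by exact_mod_cast hn
  have h4 : (0 : ℝ) < a ^ 2 := by positivity
  have : (1 + a) * (1 + (n : ℝ) * a) ≤ (1 + a) ^ (n + 1) := by
    rw [pow_succ]
    nlinarith [h1]
  nlinarith [this, h3, h4]

private lemma fstep (n : ℕ) (hn : 1 ≤ n) :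
    (((n : ℝ) + 1) / n) ^ n < (((n : ℝ) + 2) / ((n : ℝ) + 1)) ^ (n + 1) := by
  set a : ℝ := (n : ℝ) with ha
  have h0 : (0 : ℝ) < a := by rw [ha]; exact_mod_cast hn
  have h1 : (0 : ℝ) < a + 1 := by linarith
  have h2 : (0 : ℝ) < a + 2 := by linarith
  have hx : (-1 : ℝ) < -1 / (a + 1) ^ 2 := by
    rw [neg_div]
    have : 1 / (a + 1) ^ 2 < 1 := by
      rw [div_lt_one (by positivity)]
      nlinarith
    linarith
  have hx0 : (-1 : ℝ) / (a + 1) ^ 2 ≠ 0 := by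
    have : (0:ℝ) < (a+1)^2 := by positivity
    intro h
    rw [div_eq_zero_iff] at h
    rcases h with h | h <;> nlinarith
  have key := bern_strict (-1 / (a + 1) ^ 2) hx hx0 n hn
  have e1 : 1 + ((n : ℝ) + 1) * (-1 / (a + 1) ^ 2) = a / (a + 1) := by
    rw [← ha]
    field_simp
    ring
  have e2 : 1 + (-1 / (a + 1) ^ 2) = a * (a + 2) / (a + 1) ^ 2 := by
    field_simp
    ring
  rw [e1, e2] at key
  -- key : a / (a+1) < (a*(a+2)/(a+1)^2)^(n+1)
  rw [div_pow, div_lt_div_iff₀ h1 (by positivity)] at key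
  -- key : a * ((a+1)^2)^(n+1) < (a*(a+2))^(n+1) * (a+1)
  have e3 : ((a + 1) ^ 2) ^ (n + 1) = (a + 1) ^ n * (a + 1) ^ (n + 1) * (a + 1) := by
    rw [← pow_mul, ← pow_add, ← pow_succ]
    congr 1
    omega
  have e4 : (a * (a + 2)) ^ (n + 1) = a ^ n * a * (a + 2) ^ (n + 1) := by
    rw [mul_pow, pow_succ]
  rw [e3, e4] at key
  rw [div_pow, div_pow, div_lt_div_iff₀ (by positivity) (by positivity)]
  have hP : (0 : ℝ) < a * (a + 1) := by positivity
  have : a * (a + 1) * ((a + 1) ^ n * (a + 1) ^ (n + 1)) <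
      a * (a + 1) * ((a + 2) ^ (n + 1) * a ^ n) := by nlinarith [key]
  have := (mul_lt_mul_iff_right₀ hP).mp this
  linarith [this]

private lemma fmono (k : ℕ) (hk : 1 ≤ k) :
    ∀ n, k < n → (((k : ℝ) + 1) / k) ^ k < (((n : ℝ) + 1) / n) ^ n := by
  intro n
  induction n with
  | zero => omega
  | succ m ih =>
    intro hm
    have hcast : ((((m:ℕ) + 1 : ℕ) : ℝ) + 1) / (((m:ℕ) + 1 : ℕ) : ℝ) = ((m : ℝ) + 2) / ((m : ℝ) + 1) := by
      push_cast; ring_nf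
    rcases Nat.lt_or_ge k m with h | h
    · have h1 := ih h
      have h2 := fstep m (by omega)
      rw [hcast]
      exact h1.trans h2
    · have hkm : k = m := by omega
      subst hkm
      rw [hcast]
      exact fstep k hk


private lemma core_ineq (k N : ℕ) (hk : 1 ≤ k) (hkN : k < N) :
    ((k : ℝ) + 1) ^ k * (N : ℝ) ^ N < (k : ℝ) ^ k * ((N : ℝ) + 1) ^ N := by
  have hk0 : (0 : ℝ) < k := by exact_mod_cast hk
  have hN0 : (0 : ℝ) < N := by exact_mod_cast (lt_of_le_of_lt (Nat.zero_le k) hkN)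
  have h := fmono k hk N hkN
  rw [div_pow, div_pow, div_lt_div_iff₀ (by positivity) (by positivity)] at h
  linarith [h]

theorem stmt_3 (x₀ : ℕ) (hx₀ : 1 ≤ x₀)
    (L : ℕ → ℝ)
    (hL : ∀ N, x₀ < N →
      L N = ((N.factorial : ℝ) / (N - x₀).factorial) * ((N : ℝ) - x₀) ^ (N - x₀) / (N : ℝ) ^ N) :
    (∀ m n : ℕ, x₀ < m → m < n → L n < L m) ∧
    (∀ N : ℕ, x₀ < N → L N ≤ L (x₀ + 1)) := by
  have hstep : ∀ N, x₀ < N → L (N + 1) < L N := by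
    intro N hN
    set k := N - x₀ with hkdef
    have hk1 : 1 ≤ k := by omega
    have hkN : k < N := by omega
    have hk0 : (0 : ℝ) < k := by exact_mod_cast hk1
    have hN0 : (0 : ℝ) < N := by exact_mod_cast (lt_of_le_of_lt (Nat.zero_le k) hkN)
    have ec1 : ((N : ℝ) - x₀) = k := by
      rw [hkdef]; push_cast [Nat.cast_sub hN.le]; ring
    have ec2 : (((N + 1 : ℕ) : ℝ) - x₀) = (k : ℝ) + 1 := by push_cast; linarith [ec1]
    have e1 : N + 1 - x₀ = k + 1 := by omega
    rw [hL N hN, hL (N + 1) (by omega), e1, ec1, ec2]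
    push_cast [Nat.factorial_succ]
    rw [div_mul_eq_mul_div, div_div, div_mul_eq_mul_div, div_div,
      div_lt_div_iff₀ (by positivity) (by positivity)]
    have hcore := core_ineq k N hk1 hkN
    have hP : (0 : ℝ) < ((N : ℝ) + 1) * (N.factorial : ℝ) * (k.factorial : ℝ) * ((k : ℝ) + 1) := by
      positivity
    have h2 := mul_lt_mul_of_pos_left hcore hP
    rw [pow_succ ((k : ℝ) + 1), pow_succ ((N : ℝ) + 1)]
    nlinarith [h2]
  have hdec : ∀ m n : ℕ, x₀ < m → m < n → L n < L m := by
    intro m n hm hmn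
    induction n with
    | zero => omega
    | succ p ih =>
      rcases Nat.lt_or_ge m p with h | h
      · exact (hstep p (by omega)).trans (ih h)
      · have : m = p := by omega
        subst this
        exact hstep m hm
  refine ⟨hdec, fun N hN => ?_⟩
  rcases Nat.lt_or_ge (x₀ + 1) N with h | h
  · exact (hdec (x₀ + 1) N (by omega) h).le
  · have : N = x₀ + 1 := by omega
    subst this; exact le_refl _
end

section
/- For real N ≥ 2·x₁.·x.₁/(x₁. + x.₁) with N > max(x₁., x.₁), the correction factor satisfies ((N - x₁. + 1)^(1/2) · (N - x.₁ + 1)^(1/2) / ((N - x₁.)^(1/2) · (N - x.₁)^(1/2))) · (N/(N+1)) ≥ 1. -/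
theorem stmt_8 (x₁ x₂ : ℕ) (h₁ : 0 < x₁) (h₂ : 0 < x₂) (N : ℝ)
    (hN₁ : 2 * (x₁ : ℝ) * x₂ / ((x₁ : ℝ) + x₂) ≤ N) (hN₂ : (max x₁ x₂ : ℕ) < N) :
    (Real.sqrt (N - x₁ + 1) * Real.sqrt (N - x₂ + 1) /
      (Real.sqrt (N - x₁) * Real.sqrt (N - x₂))) * (N / (N + 1)) ≥ 1 := by
  have hx1 : (1 : ℝ) ≤ x₁ := by exact_mod_cast h₁
  have hx2 : (1 : ℝ) ≤ x₂ := by exact_mod_cast h₂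
  have hmax : ((max x₁ x₂ : ℕ) : ℝ) < N := hN₂
  have ha : 0 < N - x₁ := by
    have : (x₁ : ℝ) ≤ ((max x₁ x₂ : ℕ) : ℝ) := by exact_mod_cast le_max_left x₁ x₂
    linarith
  have hb : 0 < N - x₂ := by
    have : (x₂ : ℝ) ≤ ((max x₁ x₂ : ℕ) : ℝ) := by exact_mod_cast le_max_right x₁ x₂
    linarith
  have hN0 : 0 < N := by linarith
  have hsum : (0 : ℝ) < x₁ + x₂ := by linarith
  have hab : 2 * (x₁ : ℝ) * x₂ ≤ (x₁ + x₂) * N := by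
    have := (div_le_iff₀ hsum).mp hN₁
    linarith
  have key : (N - x₁) * (N - x₂) * (N + 1) ^ 2 ≤ (N - x₁ + 1) * (N - x₂ + 1) * N ^ 2 := by
    nlinarith [mul_le_mul_of_nonneg_left hab hN0.le, mul_pos (lt_of_lt_of_le one_pos hx1) (lt_of_lt_of_le one_pos hx2)]
  have hY : Real.sqrt (N - x₁) * Real.sqrt (N - x₂) * (N + 1)
      = Real.sqrt ((N - x₁) * (N - x₂) * (N + 1) ^ 2) := by
    rw [Real.sqrt_mul (mul_nonneg ha.le hb.le), Real.sqrt_mul ha.le, Real.sqrt_sq (by linarith)]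
  have hX : Real.sqrt (N - x₁ + 1) * Real.sqrt (N - x₂ + 1) * N
      = Real.sqrt ((N - x₁ + 1) * (N - x₂ + 1) * N ^ 2) := by
    rw [Real.sqrt_mul (mul_nonneg (by linarith) (by linarith : (0:ℝ) ≤ N - ↑x₂ + 1)), Real.sqrt_mul (by linarith : (0:ℝ) ≤ N - ↑x₁ + 1), Real.sqrt_sq hN0.le]
  have hYpos : 0 < Real.sqrt (N - x₁) * Real.sqrt (N - x₂) * (N + 1) := by
    have := Real.sqrt_pos.mpr ha
    have := Real.sqrt_pos.mpr hb
    positivity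
  rw [ge_iff_le, div_mul_div_comm, le_div_iff₀ (by positivity), one_mul]
  calc Real.sqrt (N - x₁) * Real.sqrt (N - x₂) * (N + 1)
      = Real.sqrt ((N - x₁) * (N - x₂) * (N + 1) ^ 2) := hY
    _ ≤ Real.sqrt ((N - x₁ + 1) * (N - x₂ + 1) * N ^ 2) := Real.sqrt_le_sqrt key
    _ = Real.sqrt (N - x₁ + 1) * Real.sqrt (N - x₂ + 1) * N := hX.symm
end

section
/- Let x₀ and x₁. be positive integers with x₁. ≤ x₀, and for δ ∈ ℝ and integers N > max(x₀, x₁.) define the adjusted profile likelihood L̂(N) = (N!/(N-x₀)!) · N^(δ - N - 3/2) · (N - x₁.)^(δ-1) · (N - x₀)^(N - x₀ + 1/2). If δ ≥ 1, then L̂(N) is strictly increasing for all sufficiently large N, hence has no finite maximizer over {N : N > x₀}. -/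
private lemma log_aux {x : ℝ} (hx : 0 < x) :
    Real.log (1 + x) < x * (2 + x) / (2 * (1 + x)) := by
  have key : StrictMonoOn (fun y : ℝ => y * (2 + y) / (2 * (1 + y)) - Real.log (1 + y))
      (Set.Ici 0) := by
    apply strictMonoOn_of_deriv_pos (convex_Ici 0)
    · intro y hy
      have hy' : (0:ℝ) ≤ y := hy
      have h1 : (0:ℝ) < 1 + y := by linarith
      apply ContinuousAt.continuousWithinAt
      apply ContinuousAt.sub
      · exact ContinuousAt.div (by fun_prop) (by fun_prop) (ne_of_gt (by linarith))
      · exact ContinuousAt.log (by fun_prop) h1.ne'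
    · intro y hy
      rw [interior_Ici] at hy
      have hy' : (0:ℝ) < y := hy
      have h1 : (0:ℝ) < 1 + y := by linarith
      have hd : HasDerivAt (fun y : ℝ => y * (2 + y) / (2 * (1 + y)) - Real.log (1 + y))
          (((1 * (2 + y) + y * 1) * (2 * (1 + y)) - y * (2 + y) * (2 * 1)) / (2 * (1 + y)) ^ 2
            - 1 / (1 + y)) y := by
        have hnum : HasDerivAt (fun y : ℝ => y * (2 + y)) (1 * (2 + y) + y * 1) y :=
          (hasDerivAt_id y).mul ((hasDerivAt_id y).const_add 2)
        have hden : HasDerivAt (fun y : ℝ => 2 * (1 + y)) (2 * 1) y :=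
          ((hasDerivAt_id y).const_add 1).const_mul 2
        have hlog : HasDerivAt (fun y : ℝ => Real.log (1 + y)) (1 / (1 + y)) y := by
          simpa using ((hasDerivAt_id y).const_add 1).log h1.ne'
        exact (hnum.div hden (ne_of_gt (by linarith))).sub hlog
      rw [hd.deriv]
      have heq : ((1 * (2 + y) + y * 1) * (2 * (1 + y)) - y * (2 + y) * (2 * 1)) / (2 * (1 + y)) ^ 2
          - 1 / (1 + y) = y ^ 2 / (2 * (1 + y) ^ 2) := by
        field_simp
        ring
      rw [heq]
      positivity
  have h2 := key (Set.mem_Ici.mpr (le_refl 0)) (Set.mem_Ici.mpr hx.le) hx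
  norm_num at h2
  linarith

private lemma h_anti : StrictAntiOn (fun t : ℝ => (t + 1/2) * (Real.log (t + 1) - Real.log t))
    (Set.Ioi 0) := by
  apply strictAntiOn_of_deriv_neg (convex_Ioi 0)
  · intro t ht
    have ht' : (0:ℝ) < t := ht
    apply ContinuousAt.continuousWithinAt
    apply ContinuousAt.mul (by fun_prop)
    apply ContinuousAt.sub
    · exact ContinuousAt.log (by fun_prop) (by linarith)
    · exact ContinuousAt.log (by fun_prop) ht'.ne'
  · intro t ht
    rw [interior_Ioi] at ht
    have ht' : (0:ℝ) < t := ht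
    have h1 : (0:ℝ) < t + 1 := by linarith
    have hd : HasDerivAt (fun t : ℝ => (t + 1/2) * (Real.log (t + 1) - Real.log t))
        (1 * (Real.log (t + 1) - Real.log t) + (t + 1/2) * (1 / (t + 1) - 1 / t)) t := by
      have hf : HasDerivAt (fun t : ℝ => t + 1/2) 1 t := (hasDerivAt_id t).add_const _
      have hg1 : HasDerivAt (fun t : ℝ => Real.log (t + 1)) (1 / (t + 1)) t := by
        simpa using ((hasDerivAt_id t).add_const 1).log h1.ne'
      have hg2 : HasDerivAt (fun t : ℝ => Real.log t) (1 / t) t := by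
        simpa using (hasDerivAt_id t).log ht'.ne'
      exact hf.mul (hg1.sub hg2)
    rw [hd.deriv]
    have key := log_aux (x := 1/t) (by positivity)
    have heq : Real.log (1 + 1/t) = Real.log (t + 1) - Real.log t := by
      rw [show (1:ℝ) + 1/t = (t + 1)/t by field_simp, Real.log_div h1.ne' ht'.ne']
    have heq2 : (1/t) * (2 + 1/t) / (2 * (1 + 1/t)) = (t + 1/2) * (1/t - 1/(t+1)) := by
      field_simp
      ring
    rw [heq, heq2] at key
    have hr : (t + 1/2) * (1 / (t + 1) - 1 / t) = -((t + 1/2) * (1/t - 1/(t+1))) := by ring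
    linarith [key, hr]

private lemma logL_eq (A B n a b δ : ℝ) (hA : 0 < A) (hB : 0 < B) (hn : 0 < n)
    (hna : 0 < n - a) (hnb : 0 < n - b) :
    Real.log (A / B * n ^ (δ - n - 3 / 2) * (n - b) ^ (δ - 1) * (n - a) ^ (n - a + 1 / 2))
      = (Real.log A - Real.log B) + (δ - n - 3 / 2) * Real.log n
        + (δ - 1) * Real.log (n - b) + (n - a + 1 / 2) * Real.log (n - a) := by
  rw [Real.log_mul (mul_ne_zero (mul_ne_zero (div_pos hA hB).ne' (Real.rpow_pos_of_pos hn _).ne')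
        (Real.rpow_pos_of_pos hnb _).ne') (Real.rpow_pos_of_pos hna _).ne',
      Real.log_mul (mul_ne_zero (div_pos hA hB).ne' (Real.rpow_pos_of_pos hn _).ne')
        (Real.rpow_pos_of_pos hnb _).ne',
      Real.log_mul (div_pos hA hB).ne' (Real.rpow_pos_of_pos hn _).ne',
      Real.log_div hA.ne' hB.ne', Real.log_rpow hn, Real.log_rpow hnb, Real.log_rpow hna]

private lemma D_pos {n a b δ : ℝ} (ha : 1 ≤ a) (hnb : 0 < n - b) (hna : 0 < n - a)
    (hδ : 1 ≤ δ) :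
    (δ - n - 3 / 2) * Real.log n + (δ - 1) * Real.log (n - b)
        + (n - a + 1 / 2) * Real.log (n - a)
      < Real.log (n + 1) - Real.log (n - a + 1)
        + (δ - (n + 1) - 3 / 2) * Real.log (n + 1) + (δ - 1) * Real.log (n - b + 1)
        + (n - a + 1 + 1 / 2) * Real.log (n - a + 1) := by
  have h0 : 0 < n := by linarith
  have hstep : (n + 1/2) * (Real.log (n + 1) - Real.log n)
      < (n - a + 1/2) * (Real.log (n - a + 1) - Real.log (n - a)) :=
    h_anti (Set.mem_Ioi.mpr hna) (Set.mem_Ioi.mpr h0) (by linarith)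
  have hl1 : Real.log n < Real.log (n + 1) := Real.log_lt_log h0 (by linarith)
  have hl2 : Real.log (n - b) < Real.log (n - b + 1) := Real.log_lt_log hnb (by linarith)
  have e2 : 0 ≤ (δ - 1) * ((Real.log (n + 1) - Real.log n)
      + (Real.log (n - b + 1) - Real.log (n - b))) :=
    mul_nonneg (by linarith) (by linarith)
  nlinarith [hstep, e2]

theorem stmt_15 (x₀ x₁ : ℕ) (hx₁ : 0 < x₁) (hx₁x₀ : x₁ ≤ x₀)
    (δ : ℝ) (L : ℕ → ℝ)
    (hL : ∀ N : ℕ, max x₀ x₁ < N →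
      L N = ((N.factorial : ℝ) / (N - x₀).factorial)
        * (N : ℝ) ^ (δ - N - 3 / 2)
        * ((N : ℝ) - x₁) ^ (δ - 1)
        * ((N : ℝ) - x₀) ^ ((N : ℝ) - x₀ + 1 / 2))
    (hδ : 1 ≤ δ) :
    (∃ N₁ : ℕ, ∀ N : ℕ, N₁ ≤ N → L N < L (N + 1)) ∧
    ¬ ∃ M : ℕ, x₀ < M ∧ ∀ N : ℕ, x₀ < N → L N ≤ L M := by
  have hx₀1 : 1 ≤ x₀ := hx₁.trans_le hx₁x₀
  have key : ∀ N : ℕ, x₀ < N → L N < L (N + 1) := by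
    intro N hN
    have hc0 : (0:ℝ) < N := by exact_mod_cast Nat.pos_of_ne_zero (by omega)
    have hca : (x₀:ℝ) < N := by exact_mod_cast hN
    have hcb : (x₁:ℝ) < N := by exact_mod_cast lt_of_le_of_lt hx₁x₀ hN
    have ha1 : (1:ℝ) ≤ (x₀:ℝ) := by exact_mod_cast hx₀1
    have h1 : (0:ℝ) < (N:ℝ) - x₀ := by linarith
    have h2 : (0:ℝ) < (N:ℝ) - x₁ := by linarith
    have hA : (0:ℝ) < (N.factorial : ℝ) := by exact_mod_cast N.factorial_pos
    have hB : (0:ℝ) < ((N - x₀).factorial : ℝ) := by exact_mod_cast (N - x₀).factorial_pos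
    have e0 := hL N (max_lt hN (lt_of_le_of_lt hx₁x₀ hN))
    have e1 := hL (N + 1) (max_lt (by omega) (by omega))
    rw [show N + 1 - x₀ = (N - x₀) + 1 from by omega, Nat.factorial_succ (N - x₀),
        Nat.factorial_succ N] at e1
    push_cast [Nat.cast_sub hN.le] at e1
    have hA' : (0:ℝ) < ((N:ℝ) + 1) * (N.factorial : ℝ) := mul_pos (by linarith) hA
    have hB' : (0:ℝ) < ((N:ℝ) - x₀ + 1) * ((N - x₀).factorial : ℝ) := mul_pos (by linarith) hB
    have hP : 0 < L N := by
      rw [e0]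
      exact mul_pos (mul_pos (mul_pos (div_pos hA hB) (Real.rpow_pos_of_pos hc0 _))
        (Real.rpow_pos_of_pos h2 _)) (Real.rpow_pos_of_pos h1 _)
    have hQ : 0 < L (N + 1) := by
      rw [e1]
      exact mul_pos (mul_pos (mul_pos (div_pos hA' hB') (Real.rpow_pos_of_pos (by linarith) _))
        (Real.rpow_pos_of_pos (by linarith) _)) (Real.rpow_pos_of_pos (by linarith) _)
    rw [← Real.log_lt_log_iff hP hQ, e0, e1,
      logL_eq (N.factorial : ℝ) ((N - x₀).factorial : ℝ) (N:ℝ) (x₀:ℝ) (x₁:ℝ) δ hA hB hc0 h1 h2,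
      logL_eq (((N:ℝ) + 1) * (N.factorial : ℝ)) (((N:ℝ) - x₀ + 1) * ((N - x₀).factorial : ℝ))
        ((N:ℝ) + 1) (x₀:ℝ) (x₁:ℝ) δ hA' hB' (by linarith) (by linarith) (by linarith),
      Real.log_mul (by linarith : (0:ℝ) < (N:ℝ) + 1).ne' hA.ne',
      Real.log_mul (by linarith : (0:ℝ) < (N:ℝ) - x₀ + 1).ne' hB.ne',
      show (N:ℝ) + 1 - (x₁:ℝ) = (N:ℝ) - x₁ + 1 from by ring,
      show (N:ℝ) + 1 - (x₀:ℝ) = (N:ℝ) - x₀ + 1 from by ring]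
    have hD := D_pos (n := (N:ℝ)) (a := (x₀:ℝ)) (b := (x₁:ℝ)) (δ := δ) ha1 h2 h1 hδ
    linarith [hD]
  refine ⟨⟨x₀ + 1, fun N hN => key N (by omega)⟩, ?_⟩
  rintro ⟨M, hM, hbound⟩
  exact absurd (hbound (M + 1) (by omega)) (not_le.mpr (key M hM))
end

section
/- With L̂ the adjusted profile likelihood for M_tb as above, there exists δ₀ < 1 such that for all δ < δ₀, L̂(N+1) < L̂(N) for every integer N > x₀, and hence the maximizer of L̂ over integers N > x₀ is N = x₀ + 1. -/
open Real

lemma log_diff_le' {x : ℝ} (hx : 0 < x) : Real.log (x+1) - Real.log x ≤ 1/x := by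
  rw [← Real.log_div (by positivity) hx.ne']
  have h := Real.log_le_sub_one_of_pos (show (0:ℝ) < (x+1)/x by positivity)
  have e : (x+1)/x - 1 = 1/x := by field_simp; ring
  linarith

lemma le_log_diff' {x : ℝ} (hx : 0 < x) : 1/(x+1) ≤ Real.log (x+1) - Real.log x := by
  have h := Real.log_le_sub_one_of_pos (show (0:ℝ) < x/(x+1) by positivity)
  rw [Real.log_div hx.ne' (by positivity)] at h
  have e : x/(x+1) - 1 = -(1/(x+1)) := by field_simp; ring
  linarith

lemma core_ineq_s16 (x δ q p m : ℝ) (hx : 0 ≤ x) (hm : 1 ≤ m) (hmp : m ≤ p) (hpq : p ≤ q)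
    (hq : q = m + x) (hδ : δ < -(x+2)) :
    (δ - q - 3/2) * (Real.log (q+1) - Real.log q)
    + (δ - 1) * (Real.log (p+1) - Real.log p)
    + (m + 1/2) * (Real.log (m+1) - Real.log m) < 0 := by
  have hm0 : (0:ℝ) < m := by linarith
  have hp0 : (0:ℝ) < p := by linarith
  have hq0 : (0:ℝ) < q := by linarith
  have ha := le_log_diff' hq0
  have hb := le_log_diff' hp0
  have hc := log_diff_le' hm0
  have hbq : 1/(q+1) ≤ Real.log (p+1) - Real.log p := by
    refine le_trans ?_ hb
    apply one_div_le_one_div_of_le <;> linarith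
  have h1 : (δ - q - 3/2) * (Real.log (q+1) - Real.log q) ≤ (δ - q - 3/2) * (1/(q+1)) :=
    mul_le_mul_of_nonpos_left ha (by linarith)
  have h2 : (δ - 1) * (Real.log (p+1) - Real.log p) ≤ (δ - 1) * (1/(q+1)) :=
    mul_le_mul_of_nonpos_left hbq (by linarith)
  have h3 : (m + 1/2) * (Real.log (m+1) - Real.log m) ≤ (m + 1/2) * (1/m) :=
    mul_le_mul_of_nonneg_left hc (by linarith)
  have e : (δ - q - 3/2) * (1/(q+1)) + (δ - 1) * (1/(q+1)) + (m + 1/2) * (1/m)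
      = ((2*δ - q - 5/2)*m + (m+1/2)*(q+1)) / ((q+1)*m) := by
    field_simp
    ring
  have hnum : (2*δ - q - 5/2)*m + (m+1/2)*(q+1) < 0 := by
    nlinarith [mul_lt_mul_of_pos_right hδ hm0, mul_nonneg hx (sub_nonneg.mpr hm)]
  have hfin : (δ - q - 3/2) * (1/(q+1)) + (δ - 1) * (1/(q+1)) + (m + 1/2) * (1/m) < 0 := by
    rw [e]
    exact div_neg_of_neg_of_pos hnum (by positivity)
  linarith

lemma key_ineq (x₀ x₁ : ℕ) (hx₁x₀ : x₁ ≤ x₀) (δ : ℝ) (hδ : δ < -((x₀:ℝ)+2))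
    (N : ℕ) (hN : x₀ < N) :
    (((N+1).factorial : ℝ) / ((N+1) - x₀).factorial)
        * ((N:ℝ)+1) ^ (δ - ((N:ℝ)+1) - 3 / 2)
        * (((N:ℝ)+1) - x₁) ^ (δ - 1)
        * (((N:ℝ)+1) - x₀) ^ (((N:ℝ)+1) - x₀ + 1 / 2)
      < ((N.factorial : ℝ) / (N - x₀).factorial)
        * (N : ℝ) ^ (δ - N - 3 / 2)
        * ((N : ℝ) - x₁) ^ (δ - 1)
        * ((N : ℝ) - x₀) ^ ((N : ℝ) - x₀ + 1 / 2) := by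
  set n : ℝ := (N:ℝ) with hn
  have hx0n : (x₀:ℝ) + 1 ≤ n := by
    have h : ((x₀:ℝ) + 1) ≤ (N:ℝ) := by exact_mod_cast hN
    rw [hn]
    exact h
  have hx1x0 : (x₁:ℝ) ≤ (x₀:ℝ) := by exact_mod_cast hx₁x₀
  have hx0 : (0:ℝ) ≤ (x₀:ℝ) := by positivity
  have hm1 : (1:ℝ) ≤ n - x₀ := by linarith
  have hp1 : (1:ℝ) ≤ n - x₁ := by linarith
  have hn1 : (1:ℝ) ≤ n := by linarith
  have hm0 : (0:ℝ) < n - x₀ := by linarith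
  have hp0 : (0:ℝ) < n - x₁ := by linarith
  have hn0 : (0:ℝ) < n := by linarith
  have hc : (0:ℝ) < (N.factorial : ℝ) / (N - x₀).factorial := by
    have := Nat.factorial_pos N
    have := Nat.factorial_pos (N - x₀)
    positivity
  have hcast : ((N - x₀ : ℕ) : ℝ) = n - x₀ := by
    rw [Nat.cast_sub hN.le]
  have hfac : (((N+1).factorial : ℝ) / ((N+1) - x₀).factorial)
      = (n+1)/((n - x₀)+1) * ((N.factorial : ℝ) / (N - x₀).factorial) := by
    have h1 : N + 1 - x₀ = (N - x₀) + 1 := by omega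
    rw [h1, Nat.factorial_succ, Nat.factorial_succ]
    push_cast [Nat.cast_sub hN.le]
    have hf1 : ((N.factorial : ℝ)) ≠ 0 := by exact_mod_cast (Nat.factorial_pos N).ne'
    have hf2 : (((N - x₀).factorial : ℝ)) ≠ 0 := by exact_mod_cast (Nat.factorial_pos (N - x₀)).ne'
    field_simp
    have hne : n - x₀ + 1 ≠ 0 := by linarith
    rw [← hn, mul_div_assoc, div_self hne, mul_one]
  rw [hfac]
  have hmain : (n+1)/((n - x₀)+1) * (((n+1)) ^ (δ - (n+1) - 3 / 2)
        * ((n+1) - x₁) ^ (δ - 1)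
        * ((n+1) - x₀) ^ ((n+1) - x₀ + 1 / 2))
      < n ^ (δ - n - 3 / 2) * (n - x₁) ^ (δ - 1) * (n - x₀) ^ (n - x₀ + 1 / 2) := by
    have e1 : (n+1) - (x₀:ℝ) = (n - x₀) + 1 := by ring
    have e2 : (n+1) - (x₁:ℝ) = (n - x₁) + 1 := by ring
    rw [e1, e2]
    have hP : (0:ℝ) < (n+1)/((n - x₀)+1) * (((n+1)) ^ (δ - (n+1) - 3 / 2)
        * ((n - x₁)+1) ^ (δ - 1)
        * ((n - x₀)+1) ^ ((n - x₀) + 1 + 1 / 2)) := by positivity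
    have hQ : (0:ℝ) < n ^ (δ - n - 3 / 2) * (n - x₁) ^ (δ - 1) * (n - x₀) ^ (n - x₀ + 1 / 2) := by
      positivity
    rw [← Real.log_lt_log_iff hP hQ]
    rw [Real.log_mul (by positivity) (by positivity), Real.log_mul (by positivity) (by positivity),
      Real.log_mul (by positivity) (by positivity), Real.log_mul (by positivity) (by positivity),
      Real.log_mul (by positivity) (by positivity),
      Real.log_div (by positivity) (by positivity),
      Real.log_rpow (by positivity), Real.log_rpow (by positivity), Real.log_rpow (by positivity),
      Real.log_rpow (by positivity), Real.log_rpow (by positivity), Real.log_rpow (by positivity)]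
    have hcore := core_ineq_s16 (x₀:ℝ) δ n (n - x₁) (n - x₀) hx0 hm1 (by linarith) (by linarith)
      (by ring) hδ
    linarith [hcore]
  calc (n+1)/((n - x₀)+1) * ((N.factorial : ℝ) / (N - x₀).factorial)
        * ((n+1)) ^ (δ - (n+1) - 3 / 2)
        * ((n+1) - x₁) ^ (δ - 1)
        * ((n+1) - x₀) ^ ((n+1) - x₀ + 1 / 2)
      = ((N.factorial : ℝ) / (N - x₀).factorial) * ((n+1)/((n - x₀)+1)
        * (((n+1)) ^ (δ - (n+1) - 3 / 2)
        * ((n+1) - x₁) ^ (δ - 1)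
        * ((n+1) - x₀) ^ ((n+1) - x₀ + 1 / 2))) := by ring
    _ < ((N.factorial : ℝ) / (N - x₀).factorial)
        * (n ^ (δ - n - 3 / 2) * (n - x₁) ^ (δ - 1) * (n - x₀) ^ (n - x₀ + 1 / 2)) :=
        (mul_lt_mul_iff_right₀ hc).mpr hmain
    _ = ((N.factorial : ℝ) / (N - x₀).factorial)
        * n ^ (δ - n - 3 / 2) * (n - x₁) ^ (δ - 1) * (n - x₀) ^ (n - x₀ + 1 / 2) := by ring

theorem stmt_16 (x₀ x₁ : ℕ) (hx₁ : 0 < x₁) (hx₁x₀ : x₁ ≤ x₀)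
    (L : ℝ → ℕ → ℝ)
    (hL : ∀ (δ : ℝ) (N : ℕ), x₀ < N →
      L δ N = ((N.factorial : ℝ) / (N - x₀).factorial)
        * (N : ℝ) ^ (δ - N - 3 / 2)
        * ((N : ℝ) - x₁) ^ (δ - 1)
        * ((N : ℝ) - x₀) ^ ((N : ℝ) - x₀ + 1 / 2)) :
    ∃ δ₀ : ℝ, δ₀ < 1 ∧ ∀ δ : ℝ, δ < δ₀ →
      (∀ N : ℕ, x₀ < N → L δ (N + 1) < L δ N) ∧
      (∀ N : ℕ, x₀ < N → L δ N ≤ L δ (x₀ + 1)) := by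
  refine ⟨-((x₀:ℝ)+2), by nlinarith [Nat.cast_nonneg (α := ℝ) x₀], fun δ hδ => ?_⟩
  have hdec : ∀ N : ℕ, x₀ < N → L δ (N + 1) < L δ N := by
    intro N hN
    rw [hL δ (N+1) (by omega), hL δ N hN]
    push_cast
    exact key_ineq x₀ x₁ hx₁x₀ δ hδ N hN
  refine ⟨hdec, ?_⟩
  intro N hN
  induction N, hN using Nat.le_induction with
  | base => exact le_refl _
  | succ n hn ih => exact le_of_lt (lt_of_lt_of_le (hdec n hn) ih)
end
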